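/- For any probability measure μ on a measurable space Ξ and any measurable function f : Ξ → ℝ with e^f ∈ L¹(μ), the supremum over probability measures ν absolutely continuous with respect to μ of (E_ν[f] − KL(ν‖μ)) equals log E_μ[e^f]. -/

import Mathlib

/-!
Tilting `μ` by `f` turns the objective into a relative entropy: for `ν ≪ μ`,
`E_ν[f] - KL(ν‖μ) = log E_μ[e^f] - KL(ν‖μ_f)` with `dμ_f ∝ e^f dμ`, so Gibbs' inequality gives the
upper bound. The bound would be attained at `ν = μ_f`, but `f` need not be `μ_f`-integrable; the
tilts by the truncations `min f n` are admissible, have value at least `log E_μ[e^{min f n}]`, and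
these values tend to `log E_μ[e^f]` by dominated convergence.
-/

open MeasureTheory

/-- Kullback–Leibler divergence `∫ log(dν/dμ) dν` (junk value if not defined). -/
noncomputable def klDiv {Ξ : Type*} [MeasurableSpace Ξ] (ν μ : Measure Ξ) : ℝ :=
  ∫ x, Real.log ((ν.rnDeriv μ x).toReal) ∂ν

open Real Filter Topology

section

variable {Ξ : Type*} [MeasurableSpace Ξ] {μ ν : Measure Ξ} {f g : Ξ → ℝ}

lemma klDiv_eq_integral_llr : klDiv ν μ = ∫ x, llr ν μ x ∂ν := rfl

lemma integral_sub_klDiv_le_log_integral_exp [IsProbabilityMeasure μ] [IsProbabilityMeasure ν]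
    (hνμ : ν ≪ μ) (hf : Integrable (fun x ↦ exp (f x)) μ) (hfν : Integrable f ν)
    (hllr : Integrable (llr ν μ) ν) :
    ∫ x, f x ∂ν - klDiv ν μ ≤ log (∫ x, exp (f x) ∂μ) := by
  have := isProbabilityMeasure_tilted hf
  have gibbs := InformationTheory.integral_llr_add_sub_measure_univ_nonneg
    (hνμ.trans (absolutelyContinuous_tilted hf)) (integrable_llr_tilted_right hνμ hfν hllr hf)
  rw [integral_llr_tilted_right hνμ hfν hf hllr] at gibbs
  simp only [probReal_univ, add_sub_cancel_right] at gibbs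
  linarith [klDiv_eq_integral_llr (ν := ν) (μ := μ)]

lemma llr_tilted_self_ae_eq [SigmaFinite μ] (hg : Integrable (fun x ↦ exp (g x)) μ) :
    llr (μ.tilted g) μ =ᵐ[μ.tilted g] fun x ↦ g x - log (∫ x, exp (g x) ∂μ) :=
  (tilted_absolutelyContinuous μ g).ae_eq (log_rnDeriv_tilted_left_self hg)

lemma integrable_llr_tilted_self [SigmaFinite μ] (hg : Integrable (fun x ↦ exp (g x)) μ)
    (hgμ : Integrable g (μ.tilted g)) : Integrable (llr (μ.tilted g) μ) (μ.tilted g) :=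
  (hgμ.sub (integrable_const _)).congr (llr_tilted_self_ae_eq hg).symm

lemma klDiv_tilted_self [IsProbabilityMeasure μ] (hg : Integrable (fun x ↦ exp (g x)) μ)
    (hgμ : Integrable g (μ.tilted g)) :
    klDiv (μ.tilted g) μ = ∫ x, g x ∂(μ.tilted g) - log (∫ x, exp (g x) ∂μ) := by
  have := isProbabilityMeasure_tilted hg
  rw [klDiv_eq_integral_llr, integral_congr_ae (llr_tilted_self_ae_eq hg),
    integral_sub hgμ (integrable_const _), integral_const, probReal_univ, one_smul]

lemma log_integral_exp_le_integral_sub_klDiv_tilted [IsProbabilityMeasure μ]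
    (hg : Integrable (fun x ↦ exp (g x)) μ) (hgf : g ≤ f) (hfμ : Integrable f (μ.tilted g))
    (hgμ : Integrable g (μ.tilted g)) :
    log (∫ x, exp (g x) ∂μ) ≤ ∫ x, f x ∂(μ.tilted g) - klDiv (μ.tilted g) μ := by
  rw [klDiv_tilted_self hg hgμ]
  linarith [integral_mono hgμ hfμ hgf]

lemma abs_mul_exp_min_le (t : ℝ) {c : ℝ} (hc : 0 ≤ c) :
    |t| * exp (min t c) ≤ 1 + exp c * exp t := by
  rcases le_or_gt t 0 with ht | ht
  · rw [min_eq_left (ht.trans hc), abs_of_nonpos ht]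
    have : -t ≤ exp (-t) := by linarith [add_one_le_exp (-t)]
    have : -t * exp t ≤ 1 :=
      calc -t * exp t ≤ exp (-t) * exp t := by gcongr
        _ = 1 := by rw [← exp_add, neg_add_cancel, exp_zero]
    linarith [mul_pos (exp_pos c) (exp_pos t)]
  · rw [abs_of_pos ht, mul_comm (exp c)]
    have : t ≤ exp t := by linarith [add_one_le_exp t]
    have : exp (min t c) ≤ exp c := exp_le_exp.mpr (min_le_right t c)
    nlinarith [exp_pos c, exp_pos (min t c)]

lemma integrable_exp_min (hf : Integrable (fun x ↦ exp (f x)) μ) (c : ℝ) :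
    Integrable (fun x ↦ exp (min (f x) c)) μ := by
  refine hf.mono ((aemeasurable_of_aemeasurable_exp hf.1.aemeasurable).min
    aemeasurable_const).exp.aestronglyMeasurable (.of_forall fun x ↦ ?_)
  simp only [norm_of_nonneg (exp_pos _).le]
  exact exp_le_exp.mpr (min_le_left _ _)

lemma integrable_tilted_min [IsFiniteMeasure μ] (hf : Integrable (fun x ↦ exp (f x)) μ)
    {c : ℝ} (hc : 0 ≤ c) : Integrable f (μ.tilted fun x ↦ min (f x) c) := by
  rw [integrable_tilted_iff (integrable_exp_min hf c)]
  have hfm := aemeasurable_of_aemeasurable_exp hf.1.aemeasurable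
  refine ((integrable_const 1).add (hf.const_mul (exp c))).mono
    ((hfm.min aemeasurable_const).exp.smul hfm).aestronglyMeasurable (.of_forall fun x ↦ ?_)
  rw [norm_smul, norm_of_nonneg (exp_pos _).le, norm_eq_abs, mul_comm, Pi.add_apply,
    norm_of_nonneg (by positivity)]
  exact abs_mul_exp_min_le (f x) hc

lemma integrable_min_tilted_min [IsFiniteMeasure μ] (hf : Integrable (fun x ↦ exp (f x)) μ)
    {c : ℝ} (hc : 0 ≤ c) :
    Integrable (fun x ↦ min (f x) c) (μ.tilted fun x ↦ min (f x) c) := by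
  refine (integrable_tilted_min hf hc).mono
    (((aemeasurable_of_aemeasurable_exp hf.1.aemeasurable).min aemeasurable_const).mono_ac
      (tilted_absolutelyContinuous _ _)).aestronglyMeasurable (.of_forall fun x ↦ ?_)
  rw [norm_eq_abs, norm_eq_abs, abs_le]
  exact ⟨le_min (neg_abs_le _) (by linarith [abs_nonneg (f x)]),
    (min_le_left _ _).trans (le_abs_self _)⟩

lemma tendsto_integral_exp_min (hf : Integrable (fun x ↦ exp (f x)) μ) :
    Tendsto (fun n : ℕ ↦ ∫ x, exp (min (f x) n) ∂μ) atTop (𝓝 (∫ x, exp (f x) ∂μ)) := by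
  refine tendsto_integral_of_dominated_convergence _ (fun n ↦ (integrable_exp_min hf n).1) hf
    (fun n ↦ .of_forall fun x ↦ ?_) (.of_forall fun x ↦ ?_)
  · rw [norm_of_nonneg (exp_pos _).le]
    exact exp_le_exp.mpr (min_le_left _ _)
  · refine tendsto_const_nhds.congr' ?_
    obtain ⟨N, hN⟩ := exists_nat_ge (f x)
    filter_upwards [eventually_ge_atTop N] with n hn
    rw [min_eq_left (hN.trans (Nat.cast_le.mpr hn))]

end

theorem donsker_varadhan_general {Ξ : Type*} [MeasurableSpace Ξ] (μ : Measure Ξ)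
    [IsProbabilityMeasure μ] (f : Ξ → ℝ)
    (hint : Integrable (fun x => Real.exp (f x)) μ) :
    IsLUB {v : ℝ | ∃ ν : Measure Ξ, IsProbabilityMeasure ν ∧ ν ≪ μ ∧
        Integrable f ν ∧
        Integrable (fun x => Real.log ((ν.rnDeriv μ x).toReal)) ν ∧
        v = (∫ x, f x ∂ν) - klDiv ν μ}
      (Real.log (∫ x, Real.exp (f x) ∂μ)) := by
  constructor
  · rintro _ ⟨ν, _, hνμ, hfν, hllr, rfl⟩
    exact integral_sub_klDiv_le_log_integral_exp hνμ hint hfν hllr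
  · intro b hb
    refine le_of_tendsto ((continuousAt_log (integral_exp_pos hint).ne').tendsto.comp
      (tendsto_integral_exp_min hint)) (.of_forall fun n ↦ ?_)
    have hn : (0 : ℝ) ≤ n := n.cast_nonneg
    have hexp := integrable_exp_min hint n
    have hgμ := integrable_min_tilted_min hint hn
    have hfμ := integrable_tilted_min hint hn
    refine (log_integral_exp_le_integral_sub_klDiv_tilted hexp (fun x ↦ min_le_left _ _) hfμ
      hgμ).trans (hb ?_)
    exact ⟨_, isProbabilityMeasure_tilted hexp, tilted_absolutelyContinuous μ _, hfμ,
      integrable_llr_tilted_self hexp hgμ, rfl⟩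

/-- **Donsker–Varadhan variational formula.** For a probability measure `μ` and a
measurable `f` with `e^f ∈ L¹(μ)`, the supremum of `E_ν[f] − KL(ν‖μ)` over probability
measures `ν ≪ μ` (for which the quantities are defined) equals `log E_μ[e^f]`. -/
theorem donsker_varadhan {Ξ : Type*} [MeasurableSpace Ξ] (μ : Measure Ξ)
    [IsProbabilityMeasure μ] (f : Ξ → ℝ) (hf : Measurable f)
    (hint : Integrable (fun x => Real.exp (f x)) μ) :
    IsLUB {v : ℝ | ∃ ν : Measure Ξ, IsProbabilityMeasure ν ∧ ν ≪ μ ∧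
        Integrable f ν ∧
        Integrable (fun x => Real.log ((ν.rnDeriv μ x).toReal)) ν ∧
        v = (∫ x, f x ∂ν) - klDiv ν μ}
      (Real.log (∫ x, Real.exp (f x) ∂μ)) :=
  donsker_varadhan_general μ f hint
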